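/- Let φ > 0, L > 0, and 0 < η₀ ≤ η₁ ≤ ... ≤ η_N. For t ∈ [N] let a_t ∈ ℝⁿ with ‖a_t‖₂ ≤ L, and define A_t = η_t I + φ ∑_{τ≤t} a_τ a_τᵀ. With delays as above and d_max^{≤N} = max_{τ≤N} min{d_τ, N-τ}, it holds that ∑_{t=1}^N ‖a_t‖_{A_{t-1}⁻¹} (∑_{τ∈m_t} ‖a_τ‖_{A_{t-1}⁻¹}) ≤ (2n·d_max^{≤N}/φ)·(φL²/η₀ + 1)·ln(1 + φL²N/(η₀n)). -/

import Mathlib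

/-!
For `τ ≤ t` the matrix `A_{t-1}` dominates `V_{τ-1} = η₀ I + φ ∑_{σ < τ} a_σ a_σᵀ` in the Loewner
order, so every factor `‖a_τ‖_{A_{t-1}⁻¹}` is at most `√g_τ` with `g_τ = ‖a_τ‖²_{V_{τ-1}⁻¹}`.
Bounding `√g_t √g_τ ≤ (g_t + g_τ) / 2`, and using that a round has at most `d_max` outstanding
rounds and is itself outstanding in at most `d_max` rounds, the left-hand side is at most
`d_max ∑_τ g_τ`. This sum is controlled by the undelayed elliptical potential argument: the matrix
determinant lemma gives `det V_τ = det V_{τ-1} (1 + φ g_τ)`, so `∑_τ log (1 + φ g_τ)` telescopes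
to `log det V_N - log det V_0 ≤ n log (1 + φ L² N / (η₀ n))` by AM-GM on the eigenvalues of
`V_N`, while `φ g_τ ≤ φ L² / η₀` yields `φ g_τ ≤ (φ L² / η₀ + 1) log (1 + φ g_τ)`.
-/

open Matrix Finset

lemma Real.le_mul_log_one_add_of_le {u U : ℝ} (hu : 0 ≤ u) (huU : u ≤ U) :
    u ≤ (U + 1) * Real.log (1 + u) := by
  have h := Real.one_sub_inv_le_log_of_pos (by positivity : 0 < 1 + u)
  calc u = (1 + u) * (1 - (1 + u)⁻¹) := by field_simp; ring
    _ ≤ (U + 1) * Real.log (1 + u) :=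
      mul_le_mul (by linarith) h (by rw [sub_nonneg]; exact inv_le_one_of_one_le₀ (by linarith))
        (by linarith)

lemma Real.prod_le_sum_div_card_pow {κ : Type*} {s : Finset κ} (hs : s.Nonempty) {z : κ → ℝ}
    (hz : ∀ i ∈ s, 0 ≤ z i) : ∏ i ∈ s, z i ≤ ((∑ i ∈ s, z i) / #s) ^ #s := by
  have hk : (0 : ℝ) < #s := by exact_mod_cast hs.card_pos
  have hgm := Real.geom_mean_le_arith_mean_weighted s (fun _ => (#s : ℝ)⁻¹) z
    (fun _ _ => by positivity) (by simp [hk.ne']) hz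
  have hprod : ∏ i ∈ s, z i = (∏ i ∈ s, z i ^ (#s : ℝ)⁻¹) ^ #s := by
    rw [← prod_pow]
    refine prod_congr rfl fun i hi => ?_
    rw [← Real.rpow_natCast, ← Real.rpow_mul (hz i hi), inv_mul_cancel₀ hk.ne', Real.rpow_one]
  rw [← mul_sum, inv_mul_eq_div] at hgm
  rw [hprod]
  exact pow_le_pow_left₀ (prod_nonneg fun i hi => Real.rpow_nonneg (hz i hi) _) hgm _

lemma Finset.sum_mul_sum_le_mul_sum_sq {α : Type*} [DecidableEq α] {s : Finset α}
    {m : α → Finset α} {D : ℕ} (hm : ∀ t ∈ s, m t ⊆ s) (hcard : ∀ t ∈ s, #(m t) ≤ D)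
    (hcard' : ∀ τ ∈ s, #{t ∈ s | τ ∈ m t} ≤ D) (x : α → ℝ) :
    ∑ t ∈ s, x t * ∑ τ ∈ m t, x τ ≤ D * ∑ t ∈ s, x t ^ 2 := by
  have hleft : ∑ t ∈ s, ∑ _τ ∈ m t, x t ^ 2 ≤ D * ∑ t ∈ s, x t ^ 2 := by
    rw [mul_sum]
    gcongr with t ht
    rw [sum_const, nsmul_eq_mul]
    gcongr
    exact_mod_cast hcard t ht
  have hright : ∑ t ∈ s, ∑ τ ∈ m t, x τ ^ 2 ≤ D * ∑ τ ∈ s, x τ ^ 2 := by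
    rw [sum_comm' (t' := s) (s' := fun τ => {t ∈ s | τ ∈ m t})
      (fun t τ => ⟨fun h => ⟨mem_filter.2 h, hm t h.1 h.2⟩, fun h => mem_filter.1 h.1⟩),
      mul_sum]
    gcongr with τ hτ
    rw [sum_const, nsmul_eq_mul]
    gcongr
    exact_mod_cast hcard' τ hτ
  calc ∑ t ∈ s, x t * ∑ τ ∈ m t, x τ = ∑ t ∈ s, ∑ τ ∈ m t, x t * x τ := by simp_rw [mul_sum]
    _ ≤ ∑ t ∈ s, ∑ τ ∈ m t, (x t ^ 2 + x τ ^ 2) / 2 := by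
        gcongr with t _ τ _
        linarith [two_mul_le_add_sq (x t) (x τ)]
    _ = (∑ t ∈ s, ∑ _τ ∈ m t, x t ^ 2 + ∑ t ∈ s, ∑ τ ∈ m t, x τ ^ 2) / 2 := by
        simp_rw [← sum_add_distrib, sum_div]
    _ ≤ D * ∑ t ∈ s, x t ^ 2 := by linarith

namespace Matrix

variable {ι : Type*} [Fintype ι]

lemma PosSemidef.dotProduct_mulVec_self_nonneg {M : Matrix ι ι ℝ} (hM : M.PosSemidef)
    (x : ι → ℝ) : 0 ≤ x ⬝ᵥ M *ᵥ x := by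
  simpa using hM.dotProduct_mulVec_nonneg x

lemma PosDef.dotProduct_inv_mulVec_le_of_posSemidef_sub [DecidableEq ι] {P Q : Matrix ι ι ℝ}
    (hP : P.PosDef) (hPQ : (Q - P).PosSemidef) (u : ι → ℝ) : u ⬝ᵥ Q⁻¹ *ᵥ u ≤ u ⬝ᵥ P⁻¹ *ᵥ u := by
  have hQ : Q.PosDef := by simpa using hP.add_posSemidef hPQ
  set x := Q⁻¹ *ᵥ u
  set y := P⁻¹ *ᵥ u
  have hQx : Q *ᵥ x = u := by simp [x, mulVec_mulVec, mul_nonsing_inv _ hQ.det_pos.ne'.isUnit]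
  have hPy : P *ᵥ y = u := by simp [y, mulVec_mulVec, mul_nonsing_inv _ hP.det_pos.ne'.isUnit]
  have hyPx : y ⬝ᵥ P *ᵥ x = u ⬝ᵥ x := by
    rw [dotProduct_mulVec, ← mulVec_transpose, ← conjTranspose_eq_transpose_of_trivial,
      hP.isHermitian.eq, hPy]
  -- `u ⬝ᵥ Q⁻¹ *ᵥ u = x ⬝ᵥ Q *ᵥ x ≥ x ⬝ᵥ P *ᵥ x`, and completing the square in the
  -- `P`-norm gives `x ⬝ᵥ P *ᵥ x ≥ 2 u ⬝ᵥ x - u ⬝ᵥ y`.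
  have h₁ := hPQ.dotProduct_mulVec_self_nonneg x
  have h₂ := hP.posSemidef.dotProduct_mulVec_self_nonneg (x - y)
  simp only [sub_mulVec, mulVec_sub, dotProduct_sub, sub_dotProduct, hQx, hPy, hyPx] at h₁ h₂
  simp only [x, y, dotProduct_comm u] at h₁ h₂ ⊢
  linarith

lemma posSemidef_sum_vecMulVec_self {κ : Type*} (s : Finset κ) (a : κ → ι → ℝ) :
    (∑ k ∈ s, vecMulVec (a k) (a k)).PosSemidef :=
  posSemidef_sum s fun k _ => by simpa using posSemidef_vecMulVec_self_star (a k)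

lemma det_add_smul_vecMulVec_self [DecidableEq ι] {B : Matrix ι ι ℝ} (hB : IsUnit B.det) (c : ℝ)
    (v : ι → ℝ) :
    (B + c • vecMulVec v v).det = B.det * (1 + c * (v ⬝ᵥ B⁻¹ *ᵥ v)) := by
  rw [← vecMulVec_smul, vecMulVec_eq Unit, det_add_replicateCol_mul_replicateRow hB,
    Matrix.mul_assoc, ← replicateCol_mulVec, det_unique (1 + _)]
  simp

lemma PosSemidef.det_le_trace_div_card_pow [DecidableEq ι] [Nonempty ι] {A : Matrix ι ι ℝ}
    (hA : A.PosSemidef) :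
    A.det ≤ (A.trace / Fintype.card ι) ^ Fintype.card ι := by
  rw [hA.isHermitian.det_eq_prod_eigenvalues, hA.isHermitian.trace_eq_sum_eigenvalues]
  simpa using Real.prod_le_sum_div_card_pow univ_nonempty fun i _ => hA.eigenvalues_nonneg i

end Matrix

section DesignMatrix

variable {ι : Type*} [DecidableEq ι]

def designMatrix (η φ : ℝ) (a : ℕ → ι → ℝ) (t : ℕ) : Matrix ι ι ℝ :=
  η • 1 + φ • ∑ τ ∈ Icc 1 t, vecMulVec (a τ) (a τ)

namespace designMatrix

variable {η φ : ℝ} {a : ℕ → ι → ℝ}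

@[simp]
lemma zero : designMatrix η φ a 0 = η • 1 := by simp [designMatrix]

lemma succ (t : ℕ) :
    designMatrix η φ a (t + 1) = designMatrix η φ a t + φ • vecMulVec (a (t + 1)) (a (t + 1)) := by
  rw [designMatrix, designMatrix, sum_Icc_succ_top (by omega), smul_add, add_assoc]

variable [Fintype ι]

lemma sub_posSemidef {η' : ℝ} (hη : η ≤ η') (hφ : 0 ≤ φ) {s t : ℕ} (hst : s ≤ t) :
    (designMatrix η' φ a t - designMatrix η φ a s).PosSemidef := by
  have hsplit : designMatrix η' φ a t - designMatrix η φ a s =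
      (η' - η) • 1 + φ • ∑ τ ∈ Icc 1 t \ Icc 1 s, vecMulVec (a τ) (a τ) := by
    rw [designMatrix, designMatrix, ← sum_sdiff (Icc_subset_Icc_right hst), sub_smul, smul_add]
    abel
  rw [hsplit]
  exact (PosSemidef.one.smul (sub_nonneg.mpr hη)).add
    ((posSemidef_sum_vecMulVec_self _ a).smul hφ)

lemma posDef (hη : 0 < η) (hφ : 0 ≤ φ) (t : ℕ) : (designMatrix η φ a t).PosDef := by
  simpa using (PosDef.one.smul hη).add_posSemidef
    (sub_posSemidef (η := η) (a := a) le_rfl hφ (Nat.zero_le t))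

lemma det_succ (hη : 0 < η) (hφ : 0 ≤ φ) (t : ℕ) :
    (designMatrix η φ a (t + 1)).det = (designMatrix η φ a t).det *
      (1 + φ * (a (t + 1) ⬝ᵥ (designMatrix η φ a t)⁻¹ *ᵥ a (t + 1))) := by
  rw [succ, det_add_smul_vecMulVec_self (posDef hη hφ t).det_pos.ne'.isUnit]

lemma trace_eq (t : ℕ) :
    (designMatrix η φ a t).trace = Fintype.card ι * η + φ * ∑ τ ∈ Icc 1 t, a τ ⬝ᵥ a τ := by
  simp [designMatrix, trace_sum, trace_vecMulVec, mul_comm]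

lemma sum_log_one_add_eq (hη : 0 < η) (hφ : 0 ≤ φ) (N : ℕ) :
    ∑ t ∈ Icc 1 N, Real.log (1 + φ * (a t ⬝ᵥ (designMatrix η φ a (t - 1))⁻¹ *ᵥ a t)) =
      Real.log (designMatrix η φ a N).det - Real.log (designMatrix η φ a 0).det := by
  induction N with
  | zero => simp
  | succ N ih =>
    have hquad := (posDef (a := a) hη hφ N).inv.posSemidef.dotProduct_mulVec_self_nonneg (a (N + 1))
    rw [sum_Icc_succ_top (by omega), ih, det_succ hη hφ, Real.log_mul (posDef hη hφ N).det_pos.ne'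
      (by positivity), Nat.add_sub_cancel]
    ring

lemma dotProduct_inv_mulVec_antitone {η' : ℝ} (hη₀ : 0 < η) (hη : η ≤ η') (hφ : 0 ≤ φ)
    {s t : ℕ} (hst : s ≤ t) (v : ι → ℝ) :
    v ⬝ᵥ (designMatrix η' φ a t)⁻¹ *ᵥ v ≤ v ⬝ᵥ (designMatrix η φ a s)⁻¹ *ᵥ v :=
  (posDef hη₀ hφ s).dotProduct_inv_mulVec_le_of_posSemidef_sub (sub_posSemidef hη hφ hst) v

lemma dotProduct_inv_mulVec_le (hη : 0 < η) (hφ : 0 ≤ φ) (t : ℕ) (v : ι → ℝ) :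
    v ⬝ᵥ (designMatrix η φ a t)⁻¹ *ᵥ v ≤ v ⬝ᵥ v / η := by
  have hinv : (η • (1 : Matrix ι ι ℝ))⁻¹ = η⁻¹ • 1 :=
    inv_eq_left_inv (by simp [smul_smul, hη.ne'])
  simpa [hinv, div_eq_inv_mul, smul_mulVec, dotProduct_smul] using
    dotProduct_inv_mulVec_antitone (a := a) hη le_rfl hφ (Nat.zero_le t) v

lemma log_det_sub_log_det_zero_le [Nonempty ι] (hη : 0 < η) (hφ : 0 ≤ φ) {L : ℝ} {N : ℕ}
    (ha : ∀ t ∈ Icc 1 N, a t ⬝ᵥ a t ≤ L ^ 2) :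
    Real.log (designMatrix η φ a N).det - Real.log (designMatrix η φ a 0).det ≤
      Fintype.card ι * Real.log (1 + φ * L ^ 2 * N / (η * Fintype.card ι)) := by
  set n : ℕ := Fintype.card ι
  have hn : (0 : ℝ) < n := by exact_mod_cast Fintype.card_pos
  have hsum : ∑ τ ∈ Icc 1 N, a τ ⬝ᵥ a τ ≤ N * L ^ 2 := by
    simpa using sum_le_sum ha
  have htr : (designMatrix η φ a N).trace / n ≤ η * (1 + φ * L ^ 2 * N / (η * n)) := by
    rw [trace_eq, div_le_iff₀ hn]
    field_simp
    nlinarith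
  have htr_pos : 0 < (designMatrix η φ a N).trace / n :=
    div_pos ((posDef hη hφ N).trace_pos) hn
  calc Real.log (designMatrix η φ a N).det - Real.log (designMatrix η φ a 0).det
      ≤ Real.log (((designMatrix η φ a N).trace / n) ^ n) - Real.log (η ^ n) := by
        gcongr
        · exact (posDef hη hφ N).det_pos
        · exact (posDef hη hφ N).posSemidef.det_le_trace_div_card_pow
        · simp [n]
    _ = n * (Real.log ((designMatrix η φ a N).trace / n) - Real.log η) := by
        rw [Real.log_pow, Real.log_pow]; ring
    _ ≤ n * (Real.log (η * (1 + φ * L ^ 2 * N / (η * n))) - Real.log η) := by gcongr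
    _ = n * Real.log (1 + φ * L ^ 2 * N / (η * n)) := by
        rw [Real.log_mul hη.ne' (by positivity)]; ring

theorem sum_dotProduct_inv_mulVec_le [Nonempty ι] (hη : 0 < η) (hφ : 0 < φ) {L : ℝ} {N : ℕ}
    (ha : ∀ t ∈ Icc 1 N, a t ⬝ᵥ a t ≤ L ^ 2) :
    ∑ t ∈ Icc 1 N, a t ⬝ᵥ (designMatrix η φ a (t - 1))⁻¹ *ᵥ a t ≤
      Fintype.card ι / φ * (φ * L ^ 2 / η + 1) *
        Real.log (1 + φ * L ^ 2 * N / (η * Fintype.card ι)) := by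
  set g := fun t => a t ⬝ᵥ (designMatrix η φ a (t - 1))⁻¹ *ᵥ a t
  have hterm : ∀ t ∈ Icc 1 N, φ * g t ≤ (φ * L ^ 2 / η + 1) * Real.log (1 + φ * g t) := by
    intro t ht
    refine Real.le_mul_log_one_add_of_le (mul_nonneg hφ.le ?_) ?_
    · exact (posDef hη hφ.le _).inv.posSemidef.dotProduct_mulVec_self_nonneg _
    · calc φ * g t ≤ φ * (a t ⬝ᵥ a t / η) := by
            gcongr; exact dotProduct_inv_mulVec_le hη hφ.le _ _
        _ ≤ φ * L ^ 2 / η := by rw [mul_div_assoc]; gcongr; exact ha t ht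
  calc ∑ t ∈ Icc 1 N, g t = φ⁻¹ * ∑ t ∈ Icc 1 N, φ * g t := by
        rw [← mul_sum, inv_mul_cancel_left₀ hφ.ne']
    _ ≤ φ⁻¹ * ((φ * L ^ 2 / η + 1) * ∑ t ∈ Icc 1 N, Real.log (1 + φ * g t)) := by
        gcongr φ⁻¹ * ?_; rw [mul_sum]; exact sum_le_sum hterm
    _ ≤ φ⁻¹ * ((φ * L ^ 2 / η + 1) * (Fintype.card ι *
          Real.log (1 + φ * L ^ 2 * N / (η * Fintype.card ι)))) := by
        rw [sum_log_one_add_eq hη hφ.le]; gcongr; exact log_det_sub_log_det_zero_le hη hφ.le ha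
    _ = _ := by ring

end designMatrix

end DesignMatrix

def outstanding (d : ℕ → ℕ) (t : ℕ) : Finset ℕ := {τ ∈ Ico 1 t | t ≤ τ + d τ}

def maxDelay (d : ℕ → ℕ) (N : ℕ) : ℕ := (Icc 1 N).sup fun τ => min (d τ) (N - τ)

section Delays

variable {d : ℕ → ℕ} {N t τ : ℕ}

lemma mem_outstanding : τ ∈ outstanding d t ↔ 1 ≤ τ ∧ τ < t ∧ t ≤ τ + d τ := by
  simp [outstanding, and_assoc]

lemma sub_le_maxDelay (ht : t ≤ N) (hτ : τ ∈ outstanding d t) : t - τ ≤ maxDelay d N := by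
  rw [mem_outstanding] at hτ
  exact (le_min (by omega) (by omega)).trans
    (le_sup (f := fun τ => min (d τ) (N - τ)) (mem_Icc.2 ⟨hτ.1, by omega⟩))

lemma outstanding_subset_Icc (ht : t ≤ N) : outstanding d t ⊆ Icc 1 N := fun τ hτ => by
  rw [mem_outstanding] at hτ
  exact mem_Icc.2 ⟨hτ.1, by omega⟩

lemma card_outstanding_le (ht : t ≤ N) : #(outstanding d t) ≤ maxDelay d N := by
  calc #(outstanding d t) ≤ #(Ico (t - maxDelay d N) t) := card_le_card fun τ hτ => by
        have := sub_le_maxDelay ht hτ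
        rw [mem_outstanding] at hτ
        exact mem_Ico.2 ⟨by omega, hτ.2.1⟩
    _ ≤ maxDelay d N := by rw [Nat.card_Ico]; omega

lemma card_filter_mem_outstanding_le : #{t ∈ Icc 1 N | τ ∈ outstanding d t} ≤ maxDelay d N := by
  calc #{t ∈ Icc 1 N | τ ∈ outstanding d t} ≤ #(Ioc τ (τ + maxDelay d N)) :=
        card_le_card fun t ht => by
          obtain ⟨ht, hτ⟩ := mem_filter.1 ht
          have := sub_le_maxDelay (mem_Icc.1 ht).2 hτ
          rw [mem_outstanding] at hτ
          exact mem_Ioc.2 ⟨hτ.2.1, by omega⟩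
    _ = maxDelay d N := by simp

end Delays

theorem stmt11_general {n : ℕ} (hn : 0 < n) (N : ℕ) (φ L : ℝ) (hφ : 0 < φ)
    (η : ℕ → ℝ) (hη0 : 0 < η 0) (hηmono : ∀ t, t < N → η t ≤ η (t + 1))
    (a : ℕ → Fin n → ℝ)
    (ha : ∀ t ∈ Finset.Icc 1 N, Real.sqrt (a t ⬝ᵥ a t) ≤ L)
    (d : ℕ → ℕ) (m : ℕ → Finset ℕ)
    (hm : ∀ t, m t = (Finset.Ico 1 t).filter (fun τ => t ≤ τ + d τ))
    (A : ℕ → Matrix (Fin n) (Fin n) ℝ)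
    (hA : ∀ t, A t = η t • (1 : Matrix (Fin n) (Fin n) ℝ)
        + φ • ∑ τ ∈ Finset.Icc 1 t, Matrix.vecMulVec (a τ) (a τ))
    (dmax : ℕ) (hdmax : dmax = (Finset.Icc 1 N).sup (fun τ => min (d τ) (N - τ))) :
    ∑ t ∈ Finset.Icc 1 N,
        Real.sqrt (a t ⬝ᵥ (A (t - 1))⁻¹.mulVec (a t)) *
          (∑ τ ∈ m t, Real.sqrt (a τ ⬝ᵥ (A (t - 1))⁻¹.mulVec (a τ))) ≤
      2 * n * dmax / φ * (φ * L ^ 2 / η 0 + 1) *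
        Real.log (1 + φ * L ^ 2 * N / (η 0 * n)) := by
  have : Nonempty (Fin n) := Fin.pos_iff_nonempty.mp hn
  obtain rfl : m = outstanding d := funext hm
  obtain rfl : dmax = maxDelay d N := hdmax
  have hA' : ∀ t, A t = designMatrix (η t) φ a t := hA
  have hη : ∀ t ≤ N, η 0 ≤ η t := by
    intro t ht
    induction t with
    | zero => rfl
    | succ k ih => exact (ih (by omega)).trans (hηmono k (by omega))
  set g := fun τ => a τ ⬝ᵥ (designMatrix (η 0) φ a (τ - 1))⁻¹ *ᵥ a τ
  have hg : ∀ τ, 0 ≤ g τ := fun τ =>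
    (designMatrix.posDef hη0 hφ.le _).inv.posSemidef.dotProduct_mulVec_self_nonneg _
  have hcompare : ∀ t ∈ Icc 1 N, ∀ τ, 1 ≤ τ → τ ≤ t → a τ ⬝ᵥ (A (t - 1))⁻¹ *ᵥ a τ ≤ g τ := by
    intro t ht τ hτ hτt
    rw [mem_Icc] at ht
    rw [hA']
    exact designMatrix.dotProduct_inv_mulVec_antitone hη0 (hη _ (by omega)) hφ.le (by omega) _
  have hlog : 0 ≤ Real.log (1 + φ * L ^ 2 * N / (η 0 * n)) :=
    Real.log_nonneg (le_add_of_nonneg_right (by positivity))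
  calc _ ≤ ∑ t ∈ Icc 1 N, √(g t) * ∑ τ ∈ outstanding d t, √(g τ) := by
        gcongr with t ht τ hτ
        · exact hcompare t ht t (mem_Icc.1 ht).1 le_rfl
        · obtain ⟨hτ1, hτt, -⟩ := mem_outstanding.1 hτ
          exact hcompare t ht τ hτ1 hτt.le
    _ ≤ maxDelay d N * ∑ t ∈ Icc 1 N, √(g t) ^ 2 :=
        sum_mul_sum_le_mul_sum_sq (fun t ht => outstanding_subset_Icc (mem_Icc.1 ht).2)
          (fun t ht => card_outstanding_le (mem_Icc.1 ht).2)
          (fun τ _ => card_filter_mem_outstanding_le) _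
    _ = maxDelay d N * ∑ t ∈ Icc 1 N, g t := by simp_rw [Real.sq_sqrt (hg _)]
    _ ≤ maxDelay d N * (n / φ * (φ * L ^ 2 / η 0 + 1) *
          Real.log (1 + φ * L ^ 2 * N / (η 0 * n))) := by
        gcongr
        simpa using designMatrix.sum_dotProduct_inv_mulVec_le hη0 hφ
          (fun t ht => (Real.sqrt_le_iff.mp (ha t ht)).2)
    _ ≤ 2 * (maxDelay d N * (n / φ * (φ * L ^ 2 / η 0 + 1) *
          Real.log (1 + φ * L ^ 2 * N / (η 0 * n)))) :=
        le_mul_of_one_le_left (by positivity) one_le_two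
    _ = _ := by ring

theorem stmt11 {n : ℕ} (hn : 0 < n) (N : ℕ) (φ L : ℝ) (hφ : 0 < φ) (hL : 0 < L)
    (η : ℕ → ℝ) (hη0 : 0 < η 0) (hηmono : ∀ t, t < N → η t ≤ η (t + 1))
    (a : ℕ → Fin n → ℝ)
    (ha : ∀ t ∈ Finset.Icc 1 N, Real.sqrt (a t ⬝ᵥ a t) ≤ L)
    (d : ℕ → ℕ) (m : ℕ → Finset ℕ)
    (hm : ∀ t, m t = (Finset.Ico 1 t).filter (fun τ => t ≤ τ + d τ))
    (A : ℕ → Matrix (Fin n) (Fin n) ℝ)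
    (hA : ∀ t, A t = η t • (1 : Matrix (Fin n) (Fin n) ℝ)
        + φ • ∑ τ ∈ Finset.Icc 1 t, Matrix.vecMulVec (a τ) (a τ))
    (dmax : ℕ) (hdmax : dmax = (Finset.Icc 1 N).sup (fun τ => min (d τ) (N - τ))) :
    ∑ t ∈ Finset.Icc 1 N,
        Real.sqrt (a t ⬝ᵥ (A (t - 1))⁻¹.mulVec (a t)) *
          (∑ τ ∈ m t, Real.sqrt (a τ ⬝ᵥ (A (t - 1))⁻¹.mulVec (a τ))) ≤
      2 * n * dmax / φ * (φ * L ^ 2 / η 0 + 1) *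
        Real.log (1 + φ * L ^ 2 * N / (η 0 * n)) :=
  stmt11_general hn N φ L hφ η hη0 hηmono a ha d m hm A hA dmax hdmax
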